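/- Let μ₀ be a Borel probability measure on ℝ with mean 0 and variance 1 whose distribution function F₀ is continuous and strictly increasing with a density f₀ that is continuous and strictly positive at F₀⁻¹(α), let α∈(0,1) with VaR_α(μ₀) ≥ 0, and for 0<ε<1 let 𝓛_ε be the set of probability measures of the form (1−θ)μ₀ + θν with θ∈[0,ε] and ν any Borel probability measure on ℝ with mean 0 and variance 1. Then the local measure of model risk for VaR_α satisfies LM = lim_{ε→0} (sup_{μ∈𝓛_ε}VaR_α(μ) − VaR_α(μ₀)) / (sup_{μ∈𝓛_ε}VaR_α(μ) − inf_{μ∈𝓛_ε}VaR_α(μ)) = 1 − α·(1 + VaR_α(μ₀)²). -/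

import Mathlib

open MeasureTheory Set Filter

/-- The distribution function of a measure: `F_μ(x) = μ((-∞, x])`. -/
noncomputable def distFun (μ : Measure ℝ) (x : ℝ) : ℝ := (μ (Iic x)).toReal

/-- The lower quantile of order `α`: `q_α(μ) = inf {x : F_μ(x) ≥ α}`. -/
noncomputable def lowerQuantile (μ : Measure ℝ) (α : ℝ) : ℝ :=
  sInf {x : ℝ | α ≤ distFun μ x}

/-- The Value-at-Risk of order `α`: `VaR_α(μ) = -q_α(μ)`. -/
noncomputable def VaR (μ : Measure ℝ) (α : ℝ) : ℝ := - lowerQuantile μ α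

/-!
Write `q = q_α(μ₀)`, `χ = f₀(q)` and `K = 1 / (1 + q²)`. If `μ = (1 - θ)μ₀ + θν` with `θ ≤ ε` and
`ν` standardized, Cantelli's inequality `F(x) ≤ 1 / (1 + x²)` for `x ≤ 0` (applied to `μ₀` and
`ν`) gives `(1 - ε)F₀(x) ≤ F_μ(x) ≤ (1 - ε)F₀(x) + ε / (1 + x²)`, and both bounds are attained up
to `o(ε)` by mixing in a two-point law that is extremal for Cantelli's inequality. Linearizing
`F₀` at `q` turns this into `sup VaR = VaR₀ + ε (K - α) / χ + o(ε)` and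
`inf VaR = VaR₀ - ε α / χ + o(ε)`, so the ratio tends to `(K - α) / K = 1 - α (1 + q²)`.
-/

open ProbabilityTheory Topology

lemma distFun_nonneg (μ : Measure ℝ) (x : ℝ) : 0 ≤ distFun μ x := ENNReal.toReal_nonneg

section Quantile

variable (μ : Measure ℝ) [IsProbabilityMeasure μ] {α : ℝ}

lemma distFun_eq_cdf : distFun μ = cdf μ :=
  funext fun x => (cdf_eq_real μ x).symm

lemma distFun_mono : Monotone (distFun μ) := by
  rw [distFun_eq_cdf]
  exact monotone_cdf μ

lemma bddBelow_setOf_le_distFun (hα : 0 < α) : BddBelow {x | α ≤ distFun μ x} := by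
  rw [distFun_eq_cdf]
  obtain ⟨x₀, hx₀⟩ := eventually_atBot.1 ((tendsto_cdf_atBot μ).eventually (eventually_lt_nhds hα))
  exact ⟨x₀, fun y hy => le_of_not_gt fun hyx => (hx₀ y hyx.le).not_ge hy⟩

lemma nonempty_setOf_le_distFun (hα : α < 1) : {x | α ≤ distFun μ x}.Nonempty := by
  rw [distFun_eq_cdf]
  exact ((tendsto_cdf_atTop μ).eventually (eventually_ge_nhds hα)).exists

lemma lowerQuantile_le {y : ℝ} (hα : 0 < α) (h : α ≤ distFun μ y) : lowerQuantile μ α ≤ y :=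
  csInf_le (bddBelow_setOf_le_distFun μ hα) h

lemma le_lowerQuantile {x : ℝ} (hα : α < 1) (h : distFun μ x < α) : x ≤ lowerQuantile μ α := by
  refine le_csInf (nonempty_setOf_le_distFun μ hα) fun y hy => le_of_not_gt fun hyx => ?_
  exact h.not_ge (hy.trans (distFun_mono μ hyx.le))

lemma neg_le_VaR {y : ℝ} (hα : 0 < α) (h : α ≤ distFun μ y) : -y ≤ VaR μ α :=
  neg_le_neg (lowerQuantile_le μ hα h)

lemma VaR_le_neg {x : ℝ} (hα : α < 1) (h : distFun μ x < α) : VaR μ α ≤ -x :=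
  neg_le_neg (le_lowerQuantile μ hα h)

lemma distFun_lowerQuantile (hα : α ∈ Ioo 0 1)
    (hcont : ContinuousAt (distFun μ) (lowerQuantile μ α)) :
    distFun μ (lowerQuantile μ α) = α := by
  set q := lowerQuantile μ α
  apply le_antisymm
  · refine le_of_tendsto (hcont.mono_left (nhdsWithin_le_nhds (s := Iio q))) ?_
    filter_upwards [self_mem_nhdsWithin] with x (hx : x < q)
    exact le_of_not_gt fun h => hx.not_ge (lowerQuantile_le μ hα.1 h.le)
  · refine ge_of_tendsto (hcont.mono_left (nhdsWithin_le_nhds (s := Ioi q))) ?_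
    filter_upwards [self_mem_nhdsWithin] with x (hx : q < x)
    obtain ⟨y, hy, hyx⟩ := exists_lt_of_csInf_lt (nonempty_setOf_le_distFun μ hα.2) hx
    exact hy.trans (distFun_mono μ hyx.le)

end Quantile

def IsStandardized (ν : Measure ℝ) : Prop :=
  IsProbabilityMeasure ν ∧ ∫ x, x ∂ν = 0 ∧ ∫ x, x ^ 2 ∂ν = 1

namespace IsStandardized

variable {ν : Measure ℝ}

lemma integrable_sq (hν : IsStandardized ν) : Integrable (fun x => x ^ 2) ν :=
  Integrable.of_integral_ne_zero (by rw [hν.2.2]; exact one_ne_zero)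

lemma integrable_id (hν : IsStandardized ν) : Integrable (fun x => x) ν := by
  have := hν.1
  exact ((memLp_two_iff_integrable_sq aestronglyMeasurable_id).2 hν.integrable_sq).integrable
    one_le_two

lemma integral_sub_sq (hν : IsStandardized ν) (c : ℝ) :
    ∫ x, (c - x) ^ 2 ∂ν = c ^ 2 + 1 := by
  have := hν.1
  have hlin : Integrable (fun x => c ^ 2 - 2 * c * x) ν :=
    (integrable_const _).sub (hν.integrable_id.const_mul _)
  have hexp : (fun x => (c - x) ^ 2) = fun x => (c ^ 2 - 2 * c * x) + x ^ 2 := by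
    ext x; ring
  rw [hexp, integral_add hlin hν.integrable_sq, integral_sub (integrable_const _)
    (hν.integrable_id.const_mul _), integral_const_mul, hν.2.1, hν.2.2]
  simp

/-- Cantelli's inequality. -/
lemma distFun_le (hν : IsStandardized ν) {t : ℝ} (ht : t ≤ 0) :
    distFun ν t ≤ 1 / (1 + t ^ 2) := by
  have := hν.1
  rcases ht.eq_or_lt with rfl | ht
  · simpa [distFun_eq_cdf] using cdf_le_one ν 0
  -- Markov's inequality for `(c - X) ^ 2` with the optimal shift `c = -1 / t`
  set c := -t⁻¹
  have hct : 0 < c - t := by have := inv_lt_zero.2 ht; linarith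
  have hmarkov := mul_meas_ge_le_integral_of_nonneg (ae_of_all _ fun x => sq_nonneg (c - x))
    (Integrable.of_integral_ne_zero (by rw [hν.integral_sub_sq c]; positivity)) ((c - t) ^ 2)
  have hsub : Iic t ⊆ {x | (c - t) ^ 2 ≤ (c - x) ^ 2} := fun x (hx : x ≤ t) =>
    pow_le_pow_left₀ hct.le (by linarith) 2
  have hbound : (c - t) ^ 2 * distFun ν t ≤ c ^ 2 + 1 := by
    rw [← hν.integral_sub_sq c]
    exact (mul_le_mul_of_nonneg_left (measureReal_mono hsub) (sq_nonneg _)).trans hmarkov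
  have hsq : (c - t) ^ 2 = (c ^ 2 + 1) * (1 + t ^ 2) := by
    simp only [c]; field_simp [ht.ne]; ring
  rw [hsq, mul_assoc] at hbound
  rw [le_div_iff₀ (by positivity), mul_comm]
  exact le_of_mul_le_mul_left (by simpa using hbound) (by positivity)

end IsStandardized

noncomputable def mixture (θ : ℝ) (μ ν : Measure ℝ) : Measure ℝ :=
  ENNReal.ofReal (1 - θ) • μ + ENNReal.ofReal θ • ν

section Mixture

variable {μ ν : Measure ℝ} {θ : ℝ}

lemma isProbabilityMeasure_mixture [IsProbabilityMeasure μ] [IsProbabilityMeasure ν]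
    (h0 : 0 ≤ θ) (h1 : θ ≤ 1) : IsProbabilityMeasure (mixture θ μ ν) := by
  constructor
  simp only [mixture, Measure.add_apply, Measure.smul_apply, smul_eq_mul, measure_univ, mul_one]
  rw [← ENNReal.ofReal_add (by linarith) h0, sub_add_cancel, ENNReal.ofReal_one]

lemma distFun_mixture [IsFiniteMeasure μ] [IsFiniteMeasure ν] (h0 : 0 ≤ θ) (h1 : θ ≤ 1)
    (x : ℝ) : distFun (mixture θ μ ν) x = (1 - θ) * distFun μ x + θ * distFun ν x := by
  simp only [distFun, mixture, Measure.add_apply, Measure.smul_apply, smul_eq_mul]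
  rw [ENNReal.toReal_add (by finiteness) (by finiteness), ENNReal.toReal_mul,
    ENNReal.toReal_mul, ENNReal.toReal_ofReal (by linarith), ENNReal.toReal_ofReal h0]

lemma integral_mixture {f : ℝ → ℝ} (h0 : 0 ≤ θ) (h1 : θ ≤ 1) (hμ : Integrable f μ)
    (hν : Integrable f ν) :
    ∫ x, f x ∂(mixture θ μ ν) = (1 - θ) * ∫ x, f x ∂μ + θ * ∫ x, f x ∂ν := by
  rw [mixture, integral_add_measure (hμ.smul_measure ENNReal.ofReal_ne_top)
    (hν.smul_measure ENNReal.ofReal_ne_top), integral_smul_measure, integral_smul_measure,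
    ENNReal.toReal_ofReal (by linarith), ENNReal.toReal_ofReal h0, smul_eq_mul, smul_eq_mul]

end Mixture

lemma distFun_dirac (a x : ℝ) : distFun (Measure.dirac a) x = if a ≤ x then 1 else 0 := by
  split_ifs with h
  · simp [distFun, Measure.dirac_apply_of_mem (show a ∈ Iic x from h)]
  · simp [distFun, Measure.dirac_apply' _ measurableSet_Iic, show a ∉ Iic x from h]

/-- The standardized law attaining equality in Cantelli's inequality at `a < 0`. -/
noncomputable def cantelliMeasure (a : ℝ) : Measure ℝ :=
  mixture (a ^ 2 / (1 + a ^ 2)) (Measure.dirac a) (Measure.dirac (-a⁻¹))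

section CantelliMeasure

variable {a : ℝ}

lemma cantelliMeasure_weight_nonneg : 0 ≤ a ^ 2 / (1 + a ^ 2) := by positivity

lemma cantelliMeasure_weight_le_one : a ^ 2 / (1 + a ^ 2) ≤ 1 :=
  div_le_one_of_le₀ (by linarith) (by positivity)

lemma isStandardized_cantelliMeasure (ha : a ≠ 0) : IsStandardized (cantelliMeasure a) := by
  have h0 := cantelliMeasure_weight_nonneg (a := a)
  have h1 := cantelliMeasure_weight_le_one (a := a)
  refine ⟨isProbabilityMeasure_mixture h0 h1, ?_, ?_⟩ <;>
  · rw [cantelliMeasure, integral_mixture h0 h1 (integrable_dirac enorm_lt_top)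
      (integrable_dirac enorm_lt_top), integral_dirac, integral_dirac]
    field_simp
    ring

lemma distFun_cantelliMeasure {x : ℝ} (hx : x < -a⁻¹) :
    distFun (cantelliMeasure a) x = if a ≤ x then 1 / (1 + a ^ 2) else 0 := by
  rw [cantelliMeasure, distFun_mixture cantelliMeasure_weight_nonneg cantelliMeasure_weight_le_one,
    distFun_dirac, distFun_dirac, if_neg hx.not_ge]
  split_ifs <;> field_simp <;> ring

end CantelliMeasure

def standardMixtures (μ₀ : Measure ℝ) (ε : ℝ) : Set (Measure ℝ) :=
  {μ | ∃ θ ∈ Icc (0 : ℝ) ε, ∃ ν, IsStandardized ν ∧ μ = mixture θ μ₀ ν}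

section StandardMixtures

variable {μ₀ μ : Measure ℝ} {α ε : ℝ}

lemma IsStandardized.self_mem_standardMixtures (hμ₀ : IsStandardized μ₀) (hε : 0 ≤ ε) :
    μ₀ ∈ standardMixtures μ₀ ε :=
  ⟨0, ⟨le_rfl, hε⟩, μ₀, hμ₀, by simp [mixture]⟩

lemma neg_le_VaR_of_mem_standardMixtures [IsProbabilityMeasure μ₀] (hα : 0 < α) (hε : ε ≤ 1)
    (hμ : μ ∈ standardMixtures μ₀ ε) {y : ℝ} (h : α ≤ (1 - ε) * distFun μ₀ y) :
    -y ≤ VaR μ α := by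
  obtain ⟨θ, ⟨hθ0, hθε⟩, ν, hν, rfl⟩ := hμ
  have := hν.1
  have := isProbabilityMeasure_mixture (μ := μ₀) (ν := ν) hθ0 (hθε.trans hε)
  refine neg_le_VaR _ hα (h.trans ?_)
  rw [distFun_mixture hθ0 (hθε.trans hε)]
  nlinarith [distFun_nonneg μ₀ y, distFun_nonneg ν y]

lemma VaR_le_neg_of_mem_standardMixtures (hμ₀ : IsStandardized μ₀) (hα : α < 1) (hε : ε ≤ 1)
    (hμ : μ ∈ standardMixtures μ₀ ε) {x : ℝ} (hx : x ≤ 0)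
    (h : (1 - ε) * distFun μ₀ x + ε * (1 / (1 + x ^ 2)) < α) : VaR μ α ≤ -x := by
  obtain ⟨θ, ⟨hθ0, hθε⟩, ν, hν, rfl⟩ := hμ
  have := hμ₀.1
  have := hν.1
  have := isProbabilityMeasure_mixture (μ := μ₀) (ν := ν) hθ0 (hθε.trans hε)
  refine VaR_le_neg _ hα (lt_of_le_of_lt ?_ h)
  rw [distFun_mixture hθ0 (hθε.trans hε)]
  -- `F₀` and `F_ν` both obey Cantelli's bound at `x`, and `θ ≤ ε`
  nlinarith [hμ₀.distFun_le hx, hν.distFun_le hx, mul_le_mul_of_nonneg_left (hν.distFun_le hx) hθ0]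

lemma exists_mem_standardMixtures_neg_le_VaR [IsProbabilityMeasure μ₀] (hα : 0 < α)
    (hε : ε ∈ Icc (0 : ℝ) 1) {x : ℝ} (hx : x < 0)
    (h : α ≤ (1 - ε) * distFun μ₀ x + ε * (1 / (1 + x ^ 2))) :
    ∃ μ ∈ standardMixtures μ₀ ε, -x ≤ VaR μ α := by
  have hν := isStandardized_cantelliMeasure hx.ne
  have := hν.1
  have := isProbabilityMeasure_mixture (μ := μ₀) (ν := cantelliMeasure x) hε.1 hε.2
  refine ⟨_, ⟨ε, ⟨hε.1, le_rfl⟩, _, hν, rfl⟩, neg_le_VaR _ hα ?_⟩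
  have hxa : x < -x⁻¹ := hx.trans (neg_pos.2 (inv_lt_zero.2 hx))
  rwa [distFun_mixture hε.1 hε.2, distFun_cantelliMeasure hxa, if_pos le_rfl]

lemma exists_mem_standardMixtures_VaR_le [IsProbabilityMeasure μ₀] (hα : α < 1)
    (hε : ε ∈ Icc (0 : ℝ) 1) {a y : ℝ} (ha : a < 0) (hy : y < -a⁻¹)
    (h : (1 - ε) * distFun μ₀ y + ε * (1 / (1 + a ^ 2)) < α) :
    ∃ μ ∈ standardMixtures μ₀ ε, VaR μ α ≤ -y := by
  have hν := isStandardized_cantelliMeasure ha.ne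
  have := hν.1
  have := isProbabilityMeasure_mixture (μ := μ₀) (ν := cantelliMeasure a) hε.1 hε.2
  refine ⟨_, ⟨ε, ⟨hε.1, le_rfl⟩, _, hν, rfl⟩, VaR_le_neg _ hα (lt_of_le_of_lt ?_ h)⟩
  rw [distFun_mixture hε.1 hε.2, distFun_cantelliMeasure hy]
  gcongr _ + ε * ?_
  · exact hε.1
  · split_ifs <;> first | rfl | positivity

end StandardMixtures

section Asymptotics

variable {F k : ℝ → ℝ} {χ q k₀ : ℝ}

lemma tendsto_slope_mixture (hF : HasDerivAt F χ q) (hk : Tendsto k (𝓝[>] 0) (𝓝 k₀))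
    (c : ℝ) :
    Tendsto (fun ε => ((1 - ε) * F (q + c * ε) + ε * k ε - F q) / ε) (𝓝[>] 0)
      (𝓝 (c * χ - F q + k₀)) := by
  have hline : HasDerivAt (fun ε : ℝ => q + c * ε) c 0 := by
    simpa using ((hasDerivAt_id (0 : ℝ)).const_mul c).const_add q
  have hcomp : HasDerivAt (fun ε => F (q + c * ε)) (χ * c) 0 :=
    HasDerivAt.comp (0 : ℝ) (by simpa using hF) hline
  have hslope : Tendsto (fun ε => (F (q + c * ε) - F q) / ε) (𝓝[>] 0) (𝓝 (c * χ)) := by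
    have := (hasDerivAt_iff_tendsto_slope_zero.1 hcomp).mono_left (nhdsGT_le_nhdsNE 0)
    simpa [div_eq_inv_mul, mul_comm] using this
  have hvalue : Tendsto (fun ε => F (q + c * ε)) (𝓝[>] 0) (𝓝 (F q)) := by
    simpa using hcomp.continuousAt.tendsto.mono_left nhdsWithin_le_nhds
  refine ((hslope.sub hvalue).add hk).congr' ?_
  filter_upwards [self_mem_nhdsWithin] with ε (hε : 0 < ε)
  field_simp
  ring

lemma eventually_mixture_lt (hF : HasDerivAt F χ q) (hk : Tendsto k (𝓝[>] 0) (𝓝 k₀))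
    {c : ℝ} (h : c * χ - F q + k₀ < 0) :
    ∀ᶠ ε in 𝓝[>] 0, (1 - ε) * F (q + c * ε) + ε * k ε < F q := by
  filter_upwards [(tendsto_slope_mixture hF hk c).eventually (eventually_lt_nhds h),
    self_mem_nhdsWithin] with ε hlt (hε : 0 < ε)
  linarith [(div_lt_iff₀ hε).1 hlt]

lemma eventually_lt_mixture (hF : HasDerivAt F χ q) (hk : Tendsto k (𝓝[>] 0) (𝓝 k₀))
    {c : ℝ} (h : 0 < c * χ - F q + k₀) :
    ∀ᶠ ε in 𝓝[>] 0, F q < (1 - ε) * F (q + c * ε) + ε * k ε := by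
  filter_upwards [(tendsto_slope_mixture hF hk c).eventually (eventually_gt_nhds h),
    self_mem_nhdsWithin] with ε hlt (hε : 0 < ε)
  linarith [(lt_div_iff₀ hε).1 hlt]

lemma tendsto_div_of_eventually_le_mul {g : ℝ → ℝ} {A : ℝ}
    (hle : ∀ c, A < c → ∀ᶠ ε in 𝓝[>] 0, g ε ≤ c * ε)
    (hge : ∀ c, c < A → ∀ᶠ ε in 𝓝[>] 0, c * ε ≤ g ε) :
    Tendsto (fun ε => g ε / ε) (𝓝[>] 0) (𝓝 A) := by
  refine tendsto_order.2 ⟨fun a ha => ?_, fun b hb => ?_⟩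
  · obtain ⟨c, hac, hcA⟩ := exists_between ha
    filter_upwards [hge c hcA, self_mem_nhdsWithin] with ε h (hε : 0 < ε)
    exact hac.trans_le ((le_div_iff₀ hε).2 h)
  · obtain ⟨c, hAc, hcb⟩ := exists_between hb
    filter_upwards [hle c hAc, self_mem_nhdsWithin] with ε h (hε : 0 < ε)
    exact ((div_le_iff₀ hε).2 h).trans_lt hcb

end Asymptotics

section LocalVaR

variable {μ₀ : Measure ℝ} {α χ : ℝ}

lemma tendsto_one_div_one_add_sq_add_mul (q c : ℝ) :
    Tendsto (fun ε => 1 / (1 + (q + c * ε) ^ 2)) (𝓝[>] 0) (𝓝 (1 / (1 + q ^ 2))) := by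
  have : Continuous fun ε : ℝ => 1 / (1 + (q + c * ε) ^ 2) :=
    continuous_const.div (by fun_prop) fun _ => by positivity
  exact (this.tendsto' 0 _ (by simp)).mono_left nhdsWithin_le_nhds

lemma eventually_forall_VaR_le (hμ₀ : IsStandardized μ₀) (hα : α ∈ Ioo (0 : ℝ) 1)
    (hF : HasDerivAt (distFun μ₀) χ (lowerQuantile μ₀ α)) (hq : lowerQuantile μ₀ α ≤ 0)
    {c : ℝ} (hc : 0 ≤ c) (hcχ : 1 / (1 + lowerQuantile μ₀ α ^ 2) - α < c * χ) :
    ∀ᶠ ε in 𝓝[>] 0, ∀ μ ∈ standardMixtures μ₀ ε, VaR μ α ≤ VaR μ₀ α + c * ε := by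
  have := hμ₀.1
  set q := lowerQuantile μ₀ α
  have hFq : distFun μ₀ q = α := distFun_lowerQuantile μ₀ hα hF.continuousAt
  filter_upwards [eventually_mixture_lt hF (tendsto_one_div_one_add_sq_add_mul q (-c)) (c := -c)
    (by rw [hFq]; linarith), Ioo_mem_nhdsGT one_pos] with ε hlt hε μ hμ
  rw [hFq] at hlt
  have := VaR_le_neg_of_mem_standardMixtures hμ₀ hα.2 hε.2.le hμ
    (by nlinarith [hε.1] : q + -c * ε ≤ 0) hlt
  change VaR μ α ≤ -q + c * ε
  linarith

lemma eventually_exists_le_VaR (hμ₀ : IsStandardized μ₀) (hα : α ∈ Ioo (0 : ℝ) 1)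
    (hF : HasDerivAt (distFun μ₀) χ (lowerQuantile μ₀ α)) (hq : lowerQuantile μ₀ α ≤ 0)
    {c : ℝ} (hc : 0 < c) (hcχ : c * χ < 1 / (1 + lowerQuantile μ₀ α ^ 2) - α) :
    ∀ᶠ ε in 𝓝[>] 0, ∃ μ ∈ standardMixtures μ₀ ε, VaR μ₀ α + c * ε ≤ VaR μ α := by
  have := hμ₀.1
  set q := lowerQuantile μ₀ α
  have hFq : distFun μ₀ q = α := distFun_lowerQuantile μ₀ hα hF.continuousAt
  filter_upwards [eventually_lt_mixture hF (tendsto_one_div_one_add_sq_add_mul q (-c)) (c := -c)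
    (by rw [hFq]; linarith), Ioo_mem_nhdsGT one_pos] with ε hlt hε
  rw [hFq] at hlt
  obtain ⟨μ, hμ, h⟩ := exists_mem_standardMixtures_neg_le_VaR hα.1 (Ioo_subset_Icc_self hε)
    (by nlinarith [hε.1] : q + -c * ε < 0) hlt.le
  refine ⟨μ, hμ, ?_⟩
  change -q + c * ε ≤ VaR μ α
  linarith

lemma eventually_forall_le_VaR (hμ₀ : IsStandardized μ₀) (hα : α ∈ Ioo (0 : ℝ) 1)
    (hF : HasDerivAt (distFun μ₀) χ (lowerQuantile μ₀ α)) {c : ℝ} (hcχ : α < c * χ) :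
    ∀ᶠ ε in 𝓝[>] 0, ∀ μ ∈ standardMixtures μ₀ ε, VaR μ₀ α - c * ε ≤ VaR μ α := by
  have := hμ₀.1
  set q := lowerQuantile μ₀ α
  have hFq : distFun μ₀ q = α := distFun_lowerQuantile μ₀ hα hF.continuousAt
  filter_upwards [eventually_lt_mixture hF tendsto_const_nhds (k₀ := 0) (c := c)
    (by rw [hFq]; linarith), Ioo_mem_nhdsGT one_pos] with ε hlt hε μ hμ
  rw [hFq, mul_zero, add_zero] at hlt
  have := neg_le_VaR_of_mem_standardMixtures hα.1 hε.2.le hμ hlt.le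
  change -q - c * ε ≤ VaR μ α
  linarith

lemma eventually_exists_VaR_le (hμ₀ : IsStandardized μ₀) (hα : α ∈ Ioo (0 : ℝ) 1)
    (hF : HasDerivAt (distFun μ₀) χ (lowerQuantile μ₀ α)) (hq : lowerQuantile μ₀ α ≤ 0)
    {c : ℝ} (hc : 0 < c) (hcχ : c * χ < α) :
    ∀ᶠ ε in 𝓝[>] 0, ∃ μ ∈ standardMixtures μ₀ ε, VaR μ α ≤ VaR μ₀ α - c * ε := by
  have := hμ₀.1
  set q := lowerQuantile μ₀ α
  have hFq : distFun μ₀ q = α := distFun_lowerQuantile μ₀ hα hF.continuousAt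
  have hk : Tendsto (fun ε => (2 * c * ε) ^ 2) (𝓝[>] 0) (𝓝 0) :=
    ((by fun_prop : Continuous fun ε : ℝ => (2 * c * ε) ^ 2).tendsto' 0 0 (by simp)).mono_left
      nhdsWithin_le_nhds
  filter_upwards [eventually_mixture_lt hF hk (c := c) (by rw [hFq]; linarith),
    Ioo_mem_nhdsGT one_pos] with ε hlt hε
  rw [hFq] at hlt
  -- a Cantelli measure with its upper atom at `2 c ε`, just above `q + c ε`
  set a := -(2 * c * ε)⁻¹
  have hb : 0 < 2 * c * ε := by have := hε.1; positivity
  have ha : a < 0 := neg_neg_of_pos (inv_pos.2 hb)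
  have hweight : 1 / (1 + a ^ 2) ≤ (2 * c * ε) ^ 2 :=
    calc 1 / (1 + a ^ 2) ≤ 1 / a ^ 2 := one_div_le_one_div_of_le (sq_pos_of_neg ha) (by linarith)
      _ = (2 * c * ε) ^ 2 := by simp only [a, one_div, neg_sq, inv_pow, inv_inv]
  obtain ⟨μ, hμ, h⟩ := exists_mem_standardMixtures_VaR_le hα.2 (Ioo_subset_Icc_self hε) ha
    (y := q + c * ε) (by simp only [a, inv_neg, inv_inv, neg_neg]; nlinarith [hε.1])
    (lt_of_le_of_lt (by have := hε.1; gcongr) hlt)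
  refine ⟨μ, hμ, ?_⟩
  change VaR μ α ≤ -q - c * ε
  linarith

theorem tendsto_sSup_VaR_sub (hμ₀ : IsStandardized μ₀) (hα : α ∈ Ioo (0 : ℝ) 1)
    (hF : HasDerivAt (distFun μ₀) χ (lowerQuantile μ₀ α)) (hχ : 0 < χ)
    (hq : lowerQuantile μ₀ α ≤ 0) :
    Tendsto (fun ε => (sSup ((fun μ => VaR μ α) '' standardMixtures μ₀ ε) - VaR μ₀ α) / ε)
      (𝓝[>] 0) (𝓝 ((1 / (1 + lowerQuantile μ₀ α ^ 2) - α) / χ)) := by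
  have := hμ₀.1
  set A := (1 / (1 + lowerQuantile μ₀ α ^ 2) - α) / χ
  have hA : 0 ≤ A := by
    refine div_nonneg (sub_nonneg.2 ?_) hχ.le
    simpa only [distFun_lowerQuantile μ₀ hα hF.continuousAt] using hμ₀.distFun_le hq
  have hupper (c : ℝ) (hc : A < c) : ∀ᶠ ε in 𝓝[>] 0,
      ∀ μ ∈ standardMixtures μ₀ ε, VaR μ α ≤ VaR μ₀ α + c * ε :=
    eventually_forall_VaR_le hμ₀ hα hF hq (hA.trans hc.le) ((div_lt_iff₀ hχ).1 hc)
  have hbdd : ∀ᶠ ε in 𝓝[>] 0, BddAbove ((fun μ => VaR μ α) '' standardMixtures μ₀ ε) :=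
    (hupper (A + 1) (lt_add_one A)).mono fun ε h => ⟨_, forall_mem_image.2 h⟩
  refine tendsto_div_of_eventually_le_mul (fun c hc => ?_) (fun c hc => ?_)
  · filter_upwards [hupper c hc, self_mem_nhdsWithin] with ε h (hε : 0 < ε)
    have := csSup_le ⟨_, mem_image_of_mem _ (hμ₀.self_mem_standardMixtures hε.le)⟩
      (forall_mem_image.2 h)
    linarith
  rcases le_or_gt c 0 with hc0 | hc0
  · filter_upwards [hbdd, self_mem_nhdsWithin] with ε hb (hε : 0 < ε)
    have := le_csSup hb (mem_image_of_mem _ (hμ₀.self_mem_standardMixtures hε.le))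
    nlinarith
  · filter_upwards [hbdd, eventually_exists_le_VaR hμ₀ hα hF hq hc0 ((lt_div_iff₀ hχ).1 hc)]
      with ε hb ⟨μ, hμ, h⟩
    linarith [le_csSup hb (mem_image_of_mem _ hμ)]

theorem tendsto_VaR_sub_sInf (hμ₀ : IsStandardized μ₀) (hα : α ∈ Ioo (0 : ℝ) 1)
    (hF : HasDerivAt (distFun μ₀) χ (lowerQuantile μ₀ α)) (hχ : 0 < χ)
    (hq : lowerQuantile μ₀ α ≤ 0) :
    Tendsto (fun ε => (VaR μ₀ α - sInf ((fun μ => VaR μ α) '' standardMixtures μ₀ ε)) / ε)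
      (𝓝[>] 0) (𝓝 (α / χ)) := by
  have hlower (c : ℝ) (hc : α / χ < c) : ∀ᶠ ε in 𝓝[>] 0,
      ∀ μ ∈ standardMixtures μ₀ ε, VaR μ₀ α - c * ε ≤ VaR μ α :=
    eventually_forall_le_VaR hμ₀ hα hF ((div_lt_iff₀ hχ).1 hc)
  have hbdd : ∀ᶠ ε in 𝓝[>] 0, BddBelow ((fun μ => VaR μ α) '' standardMixtures μ₀ ε) :=
    (hlower (α / χ + 1) (lt_add_one _)).mono fun ε h => ⟨_, forall_mem_image.2 h⟩
  refine tendsto_div_of_eventually_le_mul (fun c hc => ?_) (fun c hc => ?_)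
  · filter_upwards [hlower c hc, self_mem_nhdsWithin] with ε h (hε : 0 < ε)
    have := le_csInf ⟨_, mem_image_of_mem _ (hμ₀.self_mem_standardMixtures hε.le)⟩
      (forall_mem_image.2 h)
    linarith
  rcases le_or_gt c 0 with hc0 | hc0
  · filter_upwards [hbdd, self_mem_nhdsWithin] with ε hb (hε : 0 < ε)
    have := csInf_le hb (mem_image_of_mem _ (hμ₀.self_mem_standardMixtures hε.le))
    nlinarith
  · filter_upwards [hbdd, eventually_exists_VaR_le hμ₀ hα hF hq hc0 ((lt_div_iff₀ hχ).1 hc)]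
      with ε hb ⟨μ, hμ, h⟩
    linarith [csInf_le hb (mem_image_of_mem _ hμ)]

end LocalVaR

theorem local_measure_mixtures_general (μ₀ : Measure ℝ) [IsProbabilityMeasure μ₀]
    (hmean : (∫ x, x ∂μ₀) = 0) (hvar : (∫ x, x ^ 2 ∂μ₀) = 1)
    (α : ℝ) (hα : α ∈ Ioo (0 : ℝ) 1)
    (f₀ : ℝ → ℝ) (hderiv : ∀ x, HasDerivAt (distFun μ₀) (f₀ x) x)
    (hfpos : 0 < f₀ (lowerQuantile μ₀ α))
    (hVaR : 0 ≤ VaR μ₀ α)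
    (Lset : ℝ → Set (Measure ℝ))
    (hLset : ∀ ε ∈ Ioo (0 : ℝ) 1, Lset ε =
      {μ | ∃ θ ∈ Icc (0 : ℝ) ε, ∃ ν : Measure ℝ,
        (IsProbabilityMeasure ν ∧ (∫ x, x ∂ν) = 0 ∧ (∫ x, x ^ 2 ∂ν) = 1) ∧
        μ = ENNReal.ofReal (1 - θ) • μ₀ + ENNReal.ofReal θ • ν}) :
    Tendsto (fun ε : ℝ =>
        (sSup ((fun μ : Measure ℝ => VaR μ α) '' Lset ε) - VaR μ₀ α) /
        (sSup ((fun μ : Measure ℝ => VaR μ α) '' Lset ε) -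
          sInf ((fun μ : Measure ℝ => VaR μ α) '' Lset ε)))
      (nhdsWithin 0 (Ioi 0)) (nhds (1 - α * (1 + (VaR μ₀ α) ^ 2))) := by
  set q := lowerQuantile μ₀ α
  set χ := f₀ q
  have hμ₀ : IsStandardized μ₀ := ⟨inferInstance, hmean, hvar⟩
  have hL : ∀ ε ∈ Ioo (0 : ℝ) 1, Lset ε = standardMixtures μ₀ ε := hLset
  have hq : q ≤ 0 := neg_nonneg.1 hVaR
  have hS := tendsto_sSup_VaR_sub hμ₀ hα (hderiv q) hfpos hq
  have hI := tendsto_VaR_sub_sInf hμ₀ hα (hderiv q) hfpos hq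
  have hsum : (1 / (1 + q ^ 2) - α) / χ + α / χ = 1 / (1 + q ^ 2) / χ := by ring
  have hlimit : (1 / (1 + q ^ 2) - α) / χ / (1 / (1 + q ^ 2) / χ) = 1 - α * (1 + VaR μ₀ α ^ 2) := by
    rw [div_div_div_cancel_right₀ hfpos.ne', show VaR μ₀ α ^ 2 = q ^ 2 from neg_sq q]
    field_simp
  rw [← hlimit, ← hsum]
  refine (hS.div (hS.add hI) (hsum ▸ by positivity)).congr' ?_
  filter_upwards [Ioo_mem_nhdsGT one_pos] with ε hε
  simp only [Pi.div_apply]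
  rw [hL ε hε, ← add_div, div_div_div_cancel_right₀ hε.1.ne', sub_add_sub_cancel]

/-- Let `μ₀` be a standard probability measure (mean 0, variance 1) with
continuous, strictly increasing distribution function `F₀` having a density
`f₀` continuous and positive at `F₀⁻¹(α)`, with `VaR_α(μ₀) ≥ 0`, and for
`0 < ε < 1` let `𝓛_ε` be the set of mixtures `(1−θ)μ₀ + θν`, `θ ∈ [0,ε]`,
`ν` standard. Then the local measure of model risk for `VaR_α` equals
`1 − α(1 + VaR_α(μ₀)²)`. -/
theorem local_measure_mixtures (μ₀ : Measure ℝ) [IsProbabilityMeasure μ₀]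
    (hmean : (∫ x, x ∂μ₀) = 0) (hvar : (∫ x, x ^ 2 ∂μ₀) = 1)
    (hcont : Continuous (distFun μ₀)) (hmono : StrictMono (distFun μ₀))
    (α : ℝ) (hα : α ∈ Ioo (0 : ℝ) 1)
    (f₀ : ℝ → ℝ) (hderiv : ∀ x, HasDerivAt (distFun μ₀) (f₀ x) x)
    (hfc : ContinuousAt f₀ (lowerQuantile μ₀ α))
    (hfpos : 0 < f₀ (lowerQuantile μ₀ α))
    (hVaR : 0 ≤ VaR μ₀ α)
    (Lset : ℝ → Set (Measure ℝ))
    (hLset : ∀ ε ∈ Ioo (0 : ℝ) 1, Lset ε =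
      {μ | ∃ θ ∈ Icc (0 : ℝ) ε, ∃ ν : Measure ℝ,
        (IsProbabilityMeasure ν ∧ (∫ x, x ∂ν) = 0 ∧ (∫ x, x ^ 2 ∂ν) = 1) ∧
        μ = ENNReal.ofReal (1 - θ) • μ₀ + ENNReal.ofReal θ • ν}) :
    Tendsto (fun ε : ℝ =>
        (sSup ((fun μ : Measure ℝ => VaR μ α) '' Lset ε) - VaR μ₀ α) /
        (sSup ((fun μ : Measure ℝ => VaR μ α) '' Lset ε) -
          sInf ((fun μ : Measure ℝ => VaR μ α) '' Lset ε)))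
      (nhdsWithin 0 (Ioi 0)) (nhds (1 - α * (1 + (VaR μ₀ α) ^ 2))) :=
  local_measure_mixtures_general μ₀ hmean hvar α hα f₀ hderiv hfpos hVaR Lset hLset
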